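/- arXiv:1906.09462 — 3 statements merged into one kernel-verified Lean document; each statement's English description precedes it below -/
import Mathlib

section
/- Given real numbers ū_i, ū_{i+1}, v̄_{i+1}, there exists a unique real polynomial p₃ of degree at most 2 whose cell averages over I_i and I_{i+1} equal ū_i and ū_{i+1} respectively, and whose first-order moment over I_{i+1} equals v̄_{i+1}; moreover the first-order moment of p₃ over I_i equals (1/6)ū_{i+1} − (1/6)ū_i − v̄_{i+1}. -/
open MeasureTheory Polynomial

/-- Cell average of a polynomial over the cell of width `Δx` centered at `xc`. -/
noncomputable def cellAvg (xc Δx : ℝ) (p : Polynomial ℝ) : ℝ :=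
  (1 / Δx) * ∫ x in (xc - Δx / 2)..(xc + Δx / 2), p.eval x

/-- First-order moment of a polynomial over the cell of width `Δx` centered at `xc`. -/
noncomputable def cellMoment (xc Δx : ℝ) (p : Polynomial ℝ) : ℝ :=
  (1 / Δx) * ∫ x in (xc - Δx / 2)..(xc + Δx / 2), p.eval x * ((x - xc) / Δx)

lemma int_poly (a b c0 c1 c2 c3 : ℝ) :
    ∫ x in a..b, (c0 + c1*x + c2*x^2 + c3*x^3) =
      c0*(b-a) + c1*(b^2-a^2)/2 + c2*(b^3-a^3)/3 + c3*(b^4-a^4)/4 := by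
  have h : ∀ x ∈ Set.uIcc a b,
      HasDerivAt (fun x : ℝ => c0*x + c1*x^2/2 + c2*x^3/3 + c3*x^4/4)
        (c0 + c1*x + c2*x^2 + c3*x^3) x := by
    intro x _
    have h1 := (hasDerivAt_pow 1 x)
    have h2 := (hasDerivAt_pow 2 x)
    have h3 := (hasDerivAt_pow 3 x)
    have h4 := (hasDerivAt_pow 4 x)
    convert (((((h1.const_mul c0).add ((h2.const_mul c1).div_const 2)).add
      ((h3.const_mul c2).div_const 3)).add ((h4.const_mul c3).div_const 4)) : HasDerivAt _ _ x) using 1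
    · rfl
    · rfl
    · ext y; simp only [Pi.add_apply]; ring
    · push_cast; ring
  have hint : IntervalIntegrable (fun x : ℝ => c0 + c1*x + c2*x^2 + c3*x^3) volume a b := by
    apply Continuous.intervalIntegrable; continuity
  rw [intervalIntegral.integral_eq_sub_of_hasDerivAt h hint]
  ring

lemma eval_deg2 (p : Polynomial ℝ) (hp : p.degree ≤ 2) (x : ℝ) :
    p.eval x = p.coeff 0 + p.coeff 1 * x + p.coeff 2 * x^2 := by
  have h : p.natDegree < 3 := by
    have h2 : p.natDegree ≤ 2 := Polynomial.natDegree_le_iff_degree_le.mpr hp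
    omega
  rw [Polynomial.eval_eq_sum_range' h]
  simp [Finset.sum_range_succ]

lemma avg_eq (xc Δx : ℝ) (hΔx : Δx ≠ 0) (p : Polynomial ℝ) (hp : p.degree ≤ 2) :
    cellAvg xc Δx p = p.coeff 0 + p.coeff 1 * xc + p.coeff 2 * (xc^2 + Δx^2/12) := by
  unfold cellAvg
  rw [intervalIntegral.integral_congr (g := fun x =>
    p.coeff 0 + p.coeff 1 * x + p.coeff 2 * x^2 + 0 * x^3)
    (fun x _ => by rw [eval_deg2 p hp x]; ring)]
  rw [int_poly]
  field_simp
  ring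

lemma mom_eq (xc Δx : ℝ) (hΔx : Δx ≠ 0) (p : Polynomial ℝ) (hp : p.degree ≤ 2) :
    cellMoment xc Δx p = p.coeff 1 * Δx / 12 + p.coeff 2 * xc * Δx / 6 := by
  unfold cellMoment
  rw [intervalIntegral.integral_congr (g := fun x =>
    (-(p.coeff 0 * xc / Δx)) + ((p.coeff 0 - p.coeff 1 * xc)/Δx) * x
      + ((p.coeff 1 - p.coeff 2 * xc)/Δx) * x^2 + (p.coeff 2 / Δx) * x^3)
    (fun x _ => by rw [eval_deg2 p hp x]; field_simp; ring)]
  rw [int_poly]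
  field_simp
  ring

theorem stmt3 (xi Δx : ℝ) (hΔx : 0 < Δx) (ub ubp vbp : ℝ) :
    (∃! p : Polynomial ℝ, p.degree ≤ 2 ∧
      cellAvg xi Δx p = ub ∧ cellAvg (xi + Δx) Δx p = ubp ∧
      cellMoment (xi + Δx) Δx p = vbp) ∧
    (∀ p : Polynomial ℝ, p.degree ≤ 2 →
      cellAvg xi Δx p = ub → cellAvg (xi + Δx) Δx p = ubp →
      cellMoment (xi + Δx) Δx p = vbp →
      cellMoment xi Δx p = (1 / 6) * ubp - (1 / 6) * ub - vbp) := by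
  have hne : Δx ≠ 0 := ne_of_gt hΔx
  set c2 : ℝ := (ub - ubp + 12*vbp)/Δx^2 with hc2def
  set c1 : ℝ := 2*(ubp - ub - 6*vbp)/Δx - 2*c2*xi with hc1def
  set c0 : ℝ := ub - c2*Δx^2/12 - c1*xi - c2*xi^2 with hc0def
  set p0 : Polynomial ℝ := C c2 * X^2 + C c1 * X + C c0 with hp0def
  have hdeg0 : p0.degree ≤ 2 := Polynomial.degree_quadratic_le
  have k0 : p0.coeff 0 = c0 := by simp [hp0def]
  have k1 : p0.coeff 1 = c1 := by simp [hp0def]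
  have k2 : p0.coeff 2 = c2 := by simp [hp0def, Polynomial.coeff_X]
  constructor
  · refine ⟨p0, ⟨hdeg0, ?_, ?_, ?_⟩, ?_⟩
    · rw [avg_eq xi Δx hne p0 hdeg0, k0, k1, k2, hc0def]; ring
    · rw [avg_eq _ Δx hne p0 hdeg0, k0, k1, k2, hc0def, hc1def, hc2def]
      field_simp; ring
    · rw [mom_eq _ Δx hne p0 hdeg0, k1, k2, hc1def, hc2def]
      field_simp; ring
    · rintro p ⟨hdeg, h1, h2, h3⟩
      rw [avg_eq xi Δx hne p hdeg] at h1
      rw [avg_eq _ Δx hne p hdeg] at h2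
      rw [mom_eq _ Δx hne p hdeg] at h3
      have e2' : p.coeff 2 * Δx^2 = ub - ubp + 12*vbp := by
        linear_combination h1 - h2 + 12*h3
      have e1' : p.coeff 1 * Δx^2 = 2*(ubp-ub-6*vbp)*Δx - 2*xi*(ub-ubp+12*vbp) := by
        linear_combination 12*Δx*h3 - 2*(xi+Δx)*e2'
      have e2 : p.coeff 2 = c2 := by
        rw [hc2def]; field_simp; linear_combination e2'
      have e1 : p.coeff 1 = c1 := by
        rw [hc1def, hc2def]; field_simp; linear_combination e1'
      have e0 : p.coeff 0 = c0 := by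
        rw [hc0def]
        linear_combination h1 - xi*e1 - (xi^2+Δx^2/12)*e2
      ext n
      match n with
      | 0 => rw [e0, k0]
      | 1 => rw [e1, k1]
      | 2 => rw [e2, k2]
      | (n+3) =>
        rw [Polynomial.coeff_eq_zero_of_degree_lt, Polynomial.coeff_eq_zero_of_degree_lt]
        · exact hdeg0.trans_lt (by exact_mod_cast by omega)
        · exact hdeg.trans_lt (by exact_mod_cast by omega)
  · intro p hdeg h1 h2 h3
    rw [avg_eq xi Δx hne p hdeg] at h1
    rw [avg_eq _ Δx hne p hdeg] at h2
    rw [mom_eq _ Δx hne p hdeg] at h3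
    rw [mom_eq xi Δx hne p hdeg]
    linear_combination (1/6)*h2 - (1/6)*h1 - h3
end

section
/- Given real numbers ū_{i−1}, ū_i, ū_{i+1}, v̄_{i−1}, v̄_{i+1}, there exists a unique real polynomial p₀ of degree at most 4 whose cell averages over I_{i−1}, I_i, I_{i+1} equal ū_{i−1}, ū_i, ū_{i+1} respectively and whose first-order moments over I_{i−1} and I_{i+1} equal v̄_{i−1} and v̄_{i+1} respectively; moreover the first-order moment of p₀ over I_i equals (5/76)ū_{i+1} − (5/76)ū_{i−1} − (11/38)v̄_{i−1} − (11/38)v̄_{i+1}. -/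
open MeasureTheory Polynomial

private lemma int_cpow (c : ℝ) (k : ℕ) (a b : ℝ) :
    ∫ x in a..b, c * x ^ k = c * ((b ^ (k+1) - a ^ (k+1)) / (k+1)) := by
  rw [intervalIntegral.integral_const_mul, integral_pow]

private lemma int_eval (p : Polynomial ℝ) (hp : p.natDegree < 5) (a b : ℝ) :
    ∫ x in a..b, p.eval x
      = ∑ k ∈ Finset.range 5, p.coeff k * ((b ^ (k+1) - a ^ (k+1)) / (k+1)) := by
  have h1 : ∀ x : ℝ, p.eval x = ∑ k ∈ Finset.range 5, p.coeff k * x ^ k := fun x =>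
    p.eval_eq_sum_range' hp x
  simp_rw [h1]
  rw [intervalIntegral.integral_finset_sum]
  · exact Finset.sum_congr rfl fun k _ => int_cpow _ _ _ _
  · intro k _
    exact (continuous_const.mul (continuous_pow k)).intervalIntegrable _ _

private lemma int_eval_mom (p : Polynomial ℝ) (hp : p.natDegree < 5) (xc D a b : ℝ) :
    ∫ x in a..b, p.eval x * ((x - xc) / D)
      = ∑ k ∈ Finset.range 5, (p.coeff k / D * ((b ^ (k+2) - a ^ (k+2)) / (k+2))
          - p.coeff k * xc / D * ((b ^ (k+1) - a ^ (k+1)) / (k+1))) := by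
  have h1 : ∀ x : ℝ, p.eval x * ((x - xc) / D)
      = ∑ k ∈ Finset.range 5, (p.coeff k / D * x ^ (k+1) - p.coeff k * xc / D * x ^ k) := by
    intro x
    rw [p.eval_eq_sum_range' hp x, Finset.sum_mul]
    exact Finset.sum_congr rfl fun k _ => by ring
  simp_rw [h1]
  rw [intervalIntegral.integral_finset_sum]
  · refine Finset.sum_congr rfl fun k _ => ?_
    rw [intervalIntegral.integral_sub (f := fun x : ℝ => p.coeff k / D * x ^ (k+1)) (g := fun x : ℝ => p.coeff k * xc / D * x ^ k) ((continuous_const.mul (continuous_pow _)).intervalIntegrable _ _)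
        ((continuous_const.mul (continuous_pow _)).intervalIntegrable _ _), int_cpow, int_cpow]
    push_cast
    ring
  · intro k _
    exact ((continuous_const.mul (continuous_pow _)).sub (continuous_const.mul (continuous_pow _))).intervalIntegrable _ _

private lemma cellAvg_eq (p : Polynomial ℝ) (hp : p.natDegree < 5) (xc D : ℝ) (hD : D ≠ 0) :
    cellAvg xc D p = p.coeff 0 + p.coeff 1 * xc + p.coeff 2 * (xc^2 + D^2/12)
      + p.coeff 3 * (xc^3 + xc*D^2/4) + p.coeff 4 * (xc^4 + xc^2*D^2/2 + D^4/80) := by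
  rw [cellAvg, int_eval p hp]
  simp only [Finset.sum_range_succ, Finset.sum_range_zero]
  push_cast
  field_simp
  ring

private lemma cellMoment_eq (p : Polynomial ℝ) (hp : p.natDegree < 5) (xc D : ℝ) (hD : D ≠ 0) :
    cellMoment xc D p = D * (p.coeff 1 / 12 + p.coeff 2 * xc / 6
      + p.coeff 3 * (xc^2/4 + D^2/80) + p.coeff 4 * (xc^3/3 + xc*D^2/20)) := by
  rw [cellMoment, int_eval_mom p hp]
  simp only [Finset.sum_range_succ, Finset.sum_range_zero]
  push_cast
  field_simp
  ring
private lemma deg4aux (a b c d e : ℝ) :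
    (C a + C b * X + C c * X^2 + C d * X^3 + C e * X^4 : Polynomial ℝ).degree ≤ 4 := by
  have h0 : (C a : Polynomial ℝ).degree ≤ 4 := degree_C_le.trans (by norm_num)
  have h1 : (C b * X : Polynomial ℝ).degree ≤ 4 := (degree_C_mul_X_le b).trans (by norm_num)
  have h2 : (C c * X^2 : Polynomial ℝ).degree ≤ 4 :=
    (degree_C_mul_X_pow_le 2 c).trans (by norm_num)
  have h3 : (C d * X^3 : Polynomial ℝ).degree ≤ 4 :=
    (degree_C_mul_X_pow_le 3 d).trans (by norm_num)
  have h4 : (C e * X^4 : Polynomial ℝ).degree ≤ 4 := degree_C_mul_X_pow_le 4 e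
  exact (degree_add_le _ _).trans (max_le ((degree_add_le _ _).trans
    (max_le ((degree_add_le _ _).trans (max_le ((degree_add_le _ _).trans
      (max_le h0 h1)) h2)) h3)) h4)

private lemma nd5 {p : Polynomial ℝ} (h : p.degree ≤ 4) : p.natDegree < 5 :=
  lt_of_le_of_lt (natDegree_le_iff_degree_le.mpr h) (by norm_num)

private lemma poly_unique (xi Δx : ℝ) (hD : Δx ≠ 0) (ubm ub ubp vbm vbp : ℝ)
    (p q : Polynomial ℝ) (hpd : p.degree ≤ 4) (hqd : q.degree ≤ 4)
    (hp1 : cellAvg (xi - Δx) Δx p = ubm) (hp2 : cellAvg xi Δx p = ub)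
    (hp3 : cellAvg (xi + Δx) Δx p = ubp)
    (hp4 : cellMoment (xi - Δx) Δx p = vbm) (hp5 : cellMoment (xi + Δx) Δx p = vbp)
    (hq1 : cellAvg (xi - Δx) Δx q = ubm) (hq2 : cellAvg xi Δx q = ub)
    (hq3 : cellAvg (xi + Δx) Δx q = ubp)
    (hq4 : cellMoment (xi - Δx) Δx q = vbm) (hq5 : cellMoment (xi + Δx) Δx q = vbp) :
    p = q := by
  rw [cellAvg_eq p (nd5 hpd) _ _ hD] at hp1 hp2 hp3
  rw [cellMoment_eq p (nd5 hpd) _ _ hD] at hp4 hp5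
  rw [cellAvg_eq q (nd5 hqd) _ _ hD] at hq1 hq2 hq3
  rw [cellMoment_eq q (nd5 hqd) _ _ hD] at hq4 hq5
  have e4 : p.coeff 4 = q.coeff 4 := by
    have h : p.coeff 4 * Δx^4 = q.coeff 4 * Δx^4 := by
      linear_combination (5/4)*hp2 - (5/8)*hp3 - (5/8)*hp1 + (15/4)*hp5 - (15/4)*hp4
        - ((5/4)*hq2 - (5/8)*hq3 - (5/8)*hq1 + (15/4)*hq5 - (15/4)*hq4)
    exact mul_right_cancel₀ (pow_ne_zero 4 hD) h
  have e3 : p.coeff 3 = q.coeff 3 := by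
    have h : p.coeff 3 * Δx^3 = q.coeff 3 * Δx^3 := by
      linear_combination (-(5:ℝ)/19)*hp3 + (5/19)*hp1 + (60/19)*hp5 + (60/19)*hp4
        - ((-(5:ℝ)/19)*hq3 + (5/19)*hq1 + (60/19)*hq5 + (60/19)*hq4)
        - 4*xi*Δx^3*e4
    exact mul_right_cancel₀ (pow_ne_zero 3 hD) h
  have e2 : p.coeff 2 = q.coeff 2 := by
    have h : p.coeff 2 * Δx^2 = q.coeff 2 * Δx^2 := by
      linear_combination (23/16)*hp3 + (23/16)*hp1 - (23/8)*hp2 - (45/8)*hp5 + (45/8)*hp4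
        - ((23/16)*hq3 + (23/16)*hq1 - (23/8)*hq2 - (45/8)*hq5 + (45/8)*hq4)
        - 3*xi*Δx^2*e3 - 6*xi^2*Δx^2*e4
    exact mul_right_cancel₀ (pow_ne_zero 2 hD) h
  have e1 : p.coeff 1 = q.coeff 1 := by
    have h : p.coeff 1 * Δx = q.coeff 1 * Δx := by
      linear_combination (63/76)*hp3 - (63/76)*hp1 - (75/19)*hp5 - (75/19)*hp4
        - ((63/76)*hq3 - (63/76)*hq1 - (75/19)*hq5 - (75/19)*hq4)
        - 2*xi*Δx*e2 - 3*xi^2*Δx*e3 - 4*xi^3*Δx*e4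
    exact mul_right_cancel₀ hD h
  have e0 : p.coeff 0 = q.coeff 0 := by
    linear_combination (235/192)*hp2 - (43/384)*hp3 - (43/384)*hp1 + (27/64)*hp5 - (27/64)*hp4
      - ((235/192)*hq2 - (43/384)*hq3 - (43/384)*hq1 + (27/64)*hq5 - (27/64)*hq4)
      - xi*e1 - xi^2*e2 - xi^3*e3 - xi^4*e4
  ext n
  by_cases hn : n < 5
  · interval_cases n <;> assumption
  · rw [p.coeff_eq_zero_of_natDegree_lt, q.coeff_eq_zero_of_natDegree_lt]
    · exact lt_of_lt_of_le (nd5 hqd) (not_lt.mp hn)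
    · exact lt_of_lt_of_le (nd5 hpd) (not_lt.mp hn)

set_option maxHeartbeats 2000000 in
theorem stmt4 (xi Δx : ℝ) (hΔx : 0 < Δx) (ubm ub ubp vbm vbp : ℝ) :
    (∃! p : Polynomial ℝ, p.degree ≤ 4 ∧
      cellAvg (xi - Δx) Δx p = ubm ∧ cellAvg xi Δx p = ub ∧ cellAvg (xi + Δx) Δx p = ubp ∧
      cellMoment (xi - Δx) Δx p = vbm ∧ cellMoment (xi + Δx) Δx p = vbp) ∧
    (∀ p : Polynomial ℝ, p.degree ≤ 4 →
      cellAvg (xi - Δx) Δx p = ubm → cellAvg xi Δx p = ub → cellAvg (xi + Δx) Δx p = ubp →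
      cellMoment (xi - Δx) Δx p = vbm → cellMoment (xi + Δx) Δx p = vbp →
      cellMoment xi Δx p =
        (5 / 76) * ubp - (5 / 76) * ubm - (11 / 38) * vbm - (11 / 38) * vbp) := by
  have hD : Δx ≠ 0 := ne_of_gt hΔx
  constructor
  · set d0 : ℝ := 235/192*ub - 43/384*ubp - 43/384*ubm + 27/64*vbp - 27/64*vbm with hd0
    set d1 : ℝ := 63/76*ubp - 63/76*ubm - 75/19*vbp - 75/19*vbm with hd1
    set d2 : ℝ := -23/8*ub + 23/16*ubp + 23/16*ubm - 45/8*vbp + 45/8*vbm with hd2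
    set d3 : ℝ := -5/19*ubp + 5/19*ubm + 60/19*vbp + 60/19*vbm with hd3
    set d4 : ℝ := 5/4*ub - 5/8*ubp - 5/8*ubm + 15/4*vbp - 15/4*vbm with hd4
    have t1 : ubm = d0 - d1 + 13/12*d2 - 5/4*d3 + 121/80*d4 := by
      rw [hd0, hd1, hd2, hd3, hd4]; ring
    have t2 : ub = d0 + d2/12 + d4/80 := by
      rw [hd0, hd2, hd4]; ring
    have t3 : ubp = d0 + d1 + 13/12*d2 + 5/4*d3 + 121/80*d4 := by
      rw [hd0, hd1, hd2, hd3, hd4]; ring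
    have t4 : vbm = d1/12 - d2/6 + 21/80*d3 - 23/60*d4 := by
      rw [hd1, hd2, hd3, hd4]; ring
    have t5 : vbp = d1/12 + d2/6 + 21/80*d3 + 23/60*d4 := by
      rw [hd1, hd2, hd3, hd4]; ring
    set c4 : ℝ := d4/Δx^4 with hc4
    set c3 : ℝ := d3/Δx^3 - 4*xi*d4/Δx^4 with hc3
    set c2 : ℝ := d2/Δx^2 - 3*xi*d3/Δx^3 + 6*xi^2*d4/Δx^4 with hc2
    set c1 : ℝ := d1/Δx - 2*xi*d2/Δx^2 + 3*xi^2*d3/Δx^3 - 4*xi^3*d4/Δx^4 with hc1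
    set c0 : ℝ := d0 - xi*d1/Δx + xi^2*d2/Δx^2 - xi^3*d3/Δx^3 + xi^4*d4/Δx^4 with hc0
    have hD4 : d4 = c4*Δx^4 := by rw [hc4]; field_simp
    have hD3 : d3 = c3*Δx^3 + 4*c4*xi*Δx^3 := by rw [hc3, hc4]; field_simp; ring
    have hD2 : d2 = c2*Δx^2 + 3*c3*xi*Δx^2 + 6*c4*xi^2*Δx^2 := by
      rw [hc2, hc3, hc4]; field_simp; ring
    have hD1 : d1 = c1*Δx + 2*c2*xi*Δx + 3*c3*xi^2*Δx + 4*c4*xi^3*Δx := by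
      rw [hc1, hc2, hc3, hc4]; field_simp; ring
    have hD0 : d0 = c0 + c1*xi + c2*xi^2 + c3*xi^3 + c4*xi^4 := by
      rw [hc0, hc1, hc2, hc3, hc4]; field_simp; ring
    set p0 : Polynomial ℝ := C c0 + C c1 * X + C c2 * X^2 + C c3 * X^3 + C c4 * X^4 with hp0
    have hdeg : p0.degree ≤ 4 := deg4aux c0 c1 c2 c3 c4
    have k0 : p0.coeff 0 = c0 := by simp [hp0, coeff_add, coeff_C_mul, coeff_X_pow, coeff_C]
    have k1 : p0.coeff 1 = c1 := by simp [hp0, coeff_add, coeff_C_mul, coeff_X_pow, coeff_C]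
    have k2 : p0.coeff 2 = c2 := by simp [hp0, coeff_add, coeff_C_mul, coeff_X_pow, coeff_C]
    have k3 : p0.coeff 3 = c3 := by simp [hp0, coeff_add, coeff_C_mul, coeff_X_pow, coeff_C]
    have k4 : p0.coeff 4 = c4 := by simp [hp0, coeff_add, coeff_C_mul, coeff_X_pow, coeff_C]
    have g1 : cellAvg (xi - Δx) Δx p0 = ubm := by
      rw [cellAvg_eq p0 (nd5 hdeg) _ _ hD, k0, k1, k2, k3, k4, t1, hD0, hD1, hD2, hD3, hD4]
      ring
    have g2 : cellAvg xi Δx p0 = ub := by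
      rw [cellAvg_eq p0 (nd5 hdeg) _ _ hD, k0, k1, k2, k3, k4, t2, hD0, hD2, hD4]
      ring
    have g3 : cellAvg (xi + Δx) Δx p0 = ubp := by
      rw [cellAvg_eq p0 (nd5 hdeg) _ _ hD, k0, k1, k2, k3, k4, t3, hD0, hD1, hD2, hD3, hD4]
      ring
    have g4 : cellMoment (xi - Δx) Δx p0 = vbm := by
      rw [cellMoment_eq p0 (nd5 hdeg) _ _ hD, k1, k2, k3, k4, t4, hD1, hD2, hD3, hD4]
      ring
    have g5 : cellMoment (xi + Δx) Δx p0 = vbp := by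
      rw [cellMoment_eq p0 (nd5 hdeg) _ _ hD, k1, k2, k3, k4, t5, hD1, hD2, hD3, hD4]
      ring
    refine ⟨p0, ⟨hdeg, g1, g2, g3, g4, g5⟩, ?_⟩
    rintro p ⟨hd, h1, h2, h3, h4, h5⟩
    exact poly_unique xi Δx hD ubm ub ubp vbm vbp p p0 hd hdeg h1 h2 h3 h4 h5 g1 g2 g3 g4 g5
  · intro p hd h1 h2 h3 h4 h5
    rw [cellAvg_eq p (nd5 hd) _ _ hD] at h1 h3
    rw [cellMoment_eq p (nd5 hd) _ _ hD] at h4 h5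
    rw [cellMoment_eq p (nd5 hd) _ _ hD]
    linear_combination (5/76)*h3 - (5/76)*h1 - (11/38)*h4 - (11/38)*h5
end

section
/- Let ū_{i−1}, ū_i, ū_{i+1}, v̄_{i−1}, v̄_i, v̄_{i+1} be arbitrary real numbers. Let q₁ be the unique cubic polynomial matching cell averages ū_{i−1}, ū_i and first-order moments v̄_{i−1}, v̄_i over I_{i−1}, I_i; let q₂ be the unique cubic polynomial matching cell averages ū_{i−1}, ū_i, ū_{i+1} over I_{i−1}, I_i, I_{i+1} and the first-order moment v̄_i over I_i; let q₃ be the unique cubic polynomial matching cell averages ū_i, ū_{i+1} and first-order moments v̄_i, v̄_{i+1} over I_i, I_{i+1}; and let q₀ be the unique quintic polynomial matching cell averages ū_{i+j} and first-order moments v̄_{i+j} over I_{i+j} for j = −1, 0, 1. Then q₀(x_i + Δx/2) = (25/189)·q₁(x_i + Δx/2) + (22/63)·q₂(x_i + Δx/2) + (14/27)·q₃(x_i + Δx/2). -/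
open MeasureTheory Polynomial

private lemma L6 (c0 c1 c2 c3 c4 c5 c6 a b : ℝ) :
    (∫ x in a..b, (c0 + c1*x + c2*x^2 + c3*x^3 + c4*x^4 + c5*x^5 + c6*x^6)) =
      (c0*b + c1*b^2/2 + c2*b^3/3 + c3*b^4/4 + c4*b^5/5 + c5*b^6/6 + c6*b^7/7)
      - (c0*a + c1*a^2/2 + c2*a^3/3 + c3*a^4/4 + c4*a^5/5 + c5*a^6/6 + c6*a^7/7) := by
  have key : ∀ x : ℝ, HasDerivAt
      (fun x : ℝ => c0*x + c1*x^2/2 + c2*x^3/3 + c3*x^4/4 + c4*x^5/5 + c5*x^6/6 + c6*x^7/7)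
      (c0 + c1*x + c2*x^2 + c3*x^3 + c4*x^4 + c5*x^5 + c6*x^6) x := by
    intro x
    have h0 : HasDerivAt (fun x : ℝ => c0 * x) c0 x := by
      simpa using (hasDerivAt_id x).const_mul c0
    have h1 : HasDerivAt (fun x : ℝ => c1 * x^2 / 2) (c1 * x) x := by
      have := ((hasDerivAt_pow 2 x).const_mul c1).div_const 2
      refine this.congr_deriv ?_; push_cast; ring
    have h2 : HasDerivAt (fun x : ℝ => c2 * x^3 / 3) (c2 * x^2) x := by
      have := ((hasDerivAt_pow 3 x).const_mul c2).div_const 3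
      refine this.congr_deriv ?_; push_cast; ring
    have h3 : HasDerivAt (fun x : ℝ => c3 * x^4 / 4) (c3 * x^3) x := by
      have := ((hasDerivAt_pow 4 x).const_mul c3).div_const 4
      refine this.congr_deriv ?_; push_cast; ring
    have h4 : HasDerivAt (fun x : ℝ => c4 * x^5 / 5) (c4 * x^4) x := by
      have := ((hasDerivAt_pow 5 x).const_mul c4).div_const 5
      refine this.congr_deriv ?_; push_cast; ring
    have h5 : HasDerivAt (fun x : ℝ => c5 * x^6 / 6) (c5 * x^5) x := by
      have := ((hasDerivAt_pow 6 x).const_mul c5).div_const 6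
      refine this.congr_deriv ?_; push_cast; ring
    have h6 : HasDerivAt (fun x : ℝ => c6 * x^7 / 7) (c6 * x^6) x := by
      have := ((hasDerivAt_pow 7 x).const_mul c6).div_const 7
      refine this.congr_deriv ?_; push_cast; ring
    exact (((((h0.add h1).add h2).add h3).add h4).add h5).add h6
  rw [intervalIntegral.integral_eq_sub_of_hasDerivAt (fun x _ => key x)
    (Continuous.intervalIntegrable (by continuity) a b)]

private lemma eval5 (p : Polynomial ℝ) (hp : p.natDegree ≤ 5) (x : ℝ) :
    p.eval x = p.coeff 0 + p.coeff 1*x + p.coeff 2*x^2 + p.coeff 3*x^3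
      + p.coeff 4*x^4 + p.coeff 5*x^5 := by
  rw [Polynomial.eval_eq_sum_range' (Nat.lt_succ_of_le hp)]
  simp [Finset.sum_range_succ]

private lemma eval3 (p : Polynomial ℝ) (hp : p.natDegree ≤ 3) (x : ℝ) :
    p.eval x = p.coeff 0 + p.coeff 1*x + p.coeff 2*x^2 + p.coeff 3*x^3 := by
  rw [Polynomial.eval_eq_sum_range' (Nat.lt_succ_of_le hp)]
  simp [Finset.sum_range_succ]

private lemma int_avg5 (p : Polynomial ℝ) (hp : p.natDegree ≤ 5) (j : ℝ) :
    (∫ t in (j - 1/2)..(j + 1/2), p.eval t)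
      = p.coeff 0 + p.coeff 1 * j + p.coeff 2 * (j^2 + 1/12) + p.coeff 3 * (j^3 + j/4)
        + p.coeff 4 * (j^4 + j^2/2 + 1/80) + p.coeff 5 * (j^5 + 5/6*j^3 + j/16) := by
  rw [intervalIntegral.integral_congr (g := fun t => p.coeff 0 + p.coeff 1*t + p.coeff 2*t^2
      + p.coeff 3*t^3 + p.coeff 4*t^4 + p.coeff 5*t^5 + 0*t^6)
      (fun t _ => by simp only []; rw [eval5 p hp]; ring), L6]
  ring

private lemma int_mom5 (p : Polynomial ℝ) (hp : p.natDegree ≤ 5) (j : ℝ) :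
    (∫ t in (j - 1/2)..(j + 1/2), p.eval t * (t - j))
      = p.coeff 1 * (1/12) + p.coeff 2 * (j/6) + p.coeff 3 * (1/80 + j^2/4)
        + p.coeff 4 * (j/20 + j^3/3) + p.coeff 5 * (1/448 + j^2/8 + 5/12*j^4) := by
  rw [intervalIntegral.integral_congr (g := fun t => (-(j*p.coeff 0)) + (p.coeff 0 - j*p.coeff 1)*t
      + (p.coeff 1 - j*p.coeff 2)*t^2 + (p.coeff 2 - j*p.coeff 3)*t^3 + (p.coeff 3 - j*p.coeff 4)*t^4
      + (p.coeff 4 - j*p.coeff 5)*t^5 + (p.coeff 5)*t^6)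
      (fun t _ => by simp only []; rw [eval5 p hp]; ring), L6]
  ring

private lemma int_avg3 (p : Polynomial ℝ) (hp : p.natDegree ≤ 3) (j : ℝ) :
    (∫ t in (j - 1/2)..(j + 1/2), p.eval t)
      = p.coeff 0 + p.coeff 1 * j + p.coeff 2 * (j^2 + 1/12) + p.coeff 3 * (j^3 + j/4) := by
  rw [intervalIntegral.integral_congr (g := fun t => p.coeff 0 + p.coeff 1*t + p.coeff 2*t^2
      + p.coeff 3*t^3 + 0*t^4 + 0*t^5 + 0*t^6)
      (fun t _ => by simp only []; rw [eval3 p hp]; ring), L6]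
  ring

private lemma int_mom3 (p : Polynomial ℝ) (hp : p.natDegree ≤ 3) (j : ℝ) :
    (∫ t in (j - 1/2)..(j + 1/2), p.eval t * (t - j))
      = p.coeff 1 * (1/12) + p.coeff 2 * (j/6) + p.coeff 3 * (1/80 + j^2/4) := by
  rw [intervalIntegral.integral_congr (g := fun t => (-(j*p.coeff 0)) + (p.coeff 0 - j*p.coeff 1)*t
      + (p.coeff 1 - j*p.coeff 2)*t^2 + (p.coeff 2 - j*p.coeff 3)*t^3 + (p.coeff 3)*t^4
      + 0*t^5 + 0*t^6)
      (fun t _ => by simp only []; rw [eval3 p hp]; ring), L6]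
  ring

private lemma avg_subst (p : Polynomial ℝ) {Δx : ℝ} (hΔx : Δx ≠ 0) (xi j xc : ℝ)
    (hxc : xc = xi + j * Δx) :
    (∫ t in (j - 1/2)..(j + 1/2), (p.comp (C Δx * X + C xi)).eval t)
      = cellAvg xc Δx p := by
  have h := intervalIntegral.integral_comp_mul_add (a := j - 1/2) (b := j + 1/2)
      (fun x => p.eval x) hΔx xi
  simp only [Polynomial.eval_comp, Polynomial.eval_add, Polynomial.eval_mul,
    Polynomial.eval_C, Polynomial.eval_X]
  rw [h, show Δx * (j - 1/2) + xi = xc - Δx/2 by rw [hxc]; ring,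
    show Δx * (j + 1/2) + xi = xc + Δx/2 by rw [hxc]; ring]
  rw [cellAvg, smul_eq_mul, one_div]

private lemma mom_subst (p : Polynomial ℝ) {Δx : ℝ} (hΔx : Δx ≠ 0) (xi j xc : ℝ)
    (hxc : xc = xi + j * Δx) :
    (∫ t in (j - 1/2)..(j + 1/2), (p.comp (C Δx * X + C xi)).eval t * (t - j))
      = cellMoment xc Δx p := by
  have h := intervalIntegral.integral_comp_mul_add (a := j - 1/2) (b := j + 1/2)
      (fun x => p.eval x * ((x - xc) / Δx)) hΔx xi
  rw [intervalIntegral.integral_congr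
      (g := fun t => p.eval (Δx * t + xi) * ((Δx * t + xi - xc) / Δx))
      (fun t _ => by
        simp only [Polynomial.eval_comp, Polynomial.eval_add, Polynomial.eval_mul,
          Polynomial.eval_C, Polynomial.eval_X]
        congr 1
        rw [hxc]; field_simp; ring), h,
    show Δx * (j - 1/2) + xi = xc - Δx/2 by rw [hxc]; ring,
    show Δx * (j + 1/2) + xi = xc + Δx/2 by rw [hxc]; ring]
  rw [cellMoment, smul_eq_mul, one_div]

theorem stmt12 (xi Δx : ℝ) (hΔx : 0 < Δx) (ubm ub ubp vbm vb vbp : ℝ)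
    (q1 q2 q3 q0 : Polynomial ℝ)
    (hq1 : q1.degree ≤ 3 ∧ cellAvg (xi - Δx) Δx q1 = ubm ∧ cellAvg xi Δx q1 = ub ∧
      cellMoment (xi - Δx) Δx q1 = vbm ∧ cellMoment xi Δx q1 = vb)
    (hq2 : q2.degree ≤ 3 ∧ cellAvg (xi - Δx) Δx q2 = ubm ∧ cellAvg xi Δx q2 = ub ∧
      cellAvg (xi + Δx) Δx q2 = ubp ∧ cellMoment xi Δx q2 = vb)
    (hq3 : q3.degree ≤ 3 ∧ cellAvg xi Δx q3 = ub ∧ cellAvg (xi + Δx) Δx q3 = ubp ∧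
      cellMoment xi Δx q3 = vb ∧ cellMoment (xi + Δx) Δx q3 = vbp)
    (hq0 : q0.degree ≤ 5 ∧ cellAvg (xi - Δx) Δx q0 = ubm ∧ cellAvg xi Δx q0 = ub ∧
      cellAvg (xi + Δx) Δx q0 = ubp ∧ cellMoment (xi - Δx) Δx q0 = vbm ∧
      cellMoment xi Δx q0 = vb ∧ cellMoment (xi + Δx) Δx q0 = vbp) :
    q0.eval (xi + Δx / 2) =
      (25 / 189) * q1.eval (xi + Δx / 2) + (22 / 63) * q2.eval (xi + Δx / 2)
        + (14 / 27) * q3.eval (xi + Δx / 2) := by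
  have hΔ : Δx ≠ 0 := ne_of_gt hΔx
  have hlin : (C Δx * X + C xi).natDegree = 1 := Polynomial.natDegree_linear hΔ
  have hn1 : (q1.comp (C Δx * X + C xi)).natDegree ≤ 3 := by
    rw [Polynomial.natDegree_comp, hlin, mul_one]
    exact Polynomial.natDegree_le_iff_degree_le.mpr (by exact_mod_cast hq1.1)
  have hn2 : (q2.comp (C Δx * X + C xi)).natDegree ≤ 3 := by
    rw [Polynomial.natDegree_comp, hlin, mul_one]
    exact Polynomial.natDegree_le_iff_degree_le.mpr (by exact_mod_cast hq2.1)
  have hn3 : (q3.comp (C Δx * X + C xi)).natDegree ≤ 3 := by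
    rw [Polynomial.natDegree_comp, hlin, mul_one]
    exact Polynomial.natDegree_le_iff_degree_le.mpr (by exact_mod_cast hq3.1)
  have hn0 : (q0.comp (C Δx * X + C xi)).natDegree ≤ 5 := by
    rw [Polynomial.natDegree_comp, hlin, mul_one]
    exact Polynomial.natDegree_le_iff_degree_le.mpr (by exact_mod_cast hq0.1)
  have heval : ∀ q : Polynomial ℝ, q.eval (xi + Δx/2) = (q.comp (C Δx * X + C xi)).eval (1/2) := by
    intro q
    rw [Polynomial.eval_comp]
    simp only [Polynomial.eval_add, Polynomial.eval_mul, Polynomial.eval_C, Polynomial.eval_X]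
    congr 1; ring
  -- q1 equations
  have E11 := (int_avg3 _ hn1 (-1)).symm.trans
    ((avg_subst q1 hΔ xi (-1) (xi - Δx) (by ring)).trans hq1.2.1)
  have E12 := (int_avg3 _ hn1 0).symm.trans
    ((avg_subst q1 hΔ xi 0 xi (by ring)).trans hq1.2.2.1)
  have E13 := (int_mom3 _ hn1 (-1)).symm.trans
    ((mom_subst q1 hΔ xi (-1) (xi - Δx) (by ring)).trans hq1.2.2.2.1)
  have E14 := (int_mom3 _ hn1 0).symm.trans
    ((mom_subst q1 hΔ xi 0 xi (by ring)).trans hq1.2.2.2.2)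
  have V1 : q1.eval (xi + Δx/2) = 3/4*ubm + 1/4*ub + 7/2*vbm + 23/2*vb := by
    rw [heval q1, eval3 _ hn1]
    linear_combination (3/4)*E11 + (1/4)*E12 + (7/2)*E13 + (23/2)*E14
  -- q2 equations
  have E21 := (int_avg3 _ hn2 (-1)).symm.trans
    ((avg_subst q2 hΔ xi (-1) (xi - Δx) (by ring)).trans hq2.2.1)
  have E22 := (int_avg3 _ hn2 0).symm.trans
    ((avg_subst q2 hΔ xi 0 xi (by ring)).trans hq2.2.2.1)
  have E23 := (int_avg3 _ hn2 1).symm.trans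
    ((avg_subst q2 hΔ xi 1 (xi + Δx) (by ring)).trans hq2.2.2.2.1)
  have E24 := (int_mom3 _ hn2 0).symm.trans
    ((mom_subst q2 hΔ xi 0 xi (by ring)).trans hq2.2.2.2.2)
  have V2 : q2.eval (xi + Δx/2) = 2/33*ubm + 5/6*ub + 7/66*ubp + 60/11*vb := by
    rw [heval q2, eval3 _ hn2]
    linear_combination (2/33)*E21 + (5/6)*E22 + (7/66)*E23 + (60/11)*E24
  -- q3 equations
  have E31 := (int_avg3 _ hn3 0).symm.trans
    ((avg_subst q3 hΔ xi 0 xi (by ring)).trans hq3.2.1)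
  have E32 := (int_avg3 _ hn3 1).symm.trans
    ((avg_subst q3 hΔ xi 1 (xi + Δx) (by ring)).trans hq3.2.2.1)
  have E33 := (int_mom3 _ hn3 0).symm.trans
    ((mom_subst q3 hΔ xi 0 xi (by ring)).trans hq3.2.2.2.1)
  have E34 := (int_mom3 _ hn3 1).symm.trans
    ((mom_subst q3 hΔ xi 1 (xi + Δx) (by ring)).trans hq3.2.2.2.2)
  have V3 : q3.eval (xi + Δx/2) = 1/2*ub + 1/2*ubp + 2*vb - 2*vbp := by
    rw [heval q3, eval3 _ hn3]
    linear_combination (1/2)*E31 + (1/2)*E32 + 2*E33 + (-2)*E34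
  -- q0 equations
  have E01 := (int_avg5 _ hn0 (-1)).symm.trans
    ((avg_subst q0 hΔ xi (-1) (xi - Δx) (by ring)).trans hq0.2.1)
  have E02 := (int_avg5 _ hn0 0).symm.trans
    ((avg_subst q0 hΔ xi 0 xi (by ring)).trans hq0.2.2.1)
  have E03 := (int_avg5 _ hn0 1).symm.trans
    ((avg_subst q0 hΔ xi 1 (xi + Δx) (by ring)).trans hq0.2.2.2.1)
  have E04 := (int_mom5 _ hn0 (-1)).symm.trans
    ((mom_subst q0 hΔ xi (-1) (xi - Δx) (by ring)).trans hq0.2.2.2.2.1)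
  have E05 := (int_mom5 _ hn0 0).symm.trans
    ((mom_subst q0 hΔ xi 0 xi (by ring)).trans hq0.2.2.2.2.2.1)
  have E06 := (int_mom5 _ hn0 1).symm.trans
    ((mom_subst q0 hΔ xi 1 (xi + Δx) (by ring)).trans hq0.2.2.2.2.2.2)
  have V0 : q0.eval (xi + Δx/2) = 13/108*ubm + 7/12*ub + 8/27*ubp
      + 25/54*vbm + 241/54*vb - 28/27*vbp := by
    rw [heval q0, eval5 _ hn0]
    linear_combination (13/108)*E01 + (7/12)*E02 + (8/27)*E03
      + (25/54)*E04 + (241/54)*E05 + (-28/27)*E06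
  rw [V0, V1, V2, V3]; ring
end
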